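/- With X̂ the lift to ℝ⁵(x,y,p,f,g) of the prolongation of an 𝔰𝔩₃ vector field X = (a₀ + a₁₁x + a₁₂y)∂ₓ + (b₀ + a₂₁x + a₂₂y)∂_y + (c₁x + c₂y)(x∂ₓ + y∂_y) as in the previous construction, extended to first-order jet coordinates (f_x, f_y, f_p, g_x, g_y, g_p) by the standard prolongation, the function I₁ = g_p is a relative invariant with weight μ(I₁) = 2(c₂x + a₁₂)(p − g), i.e., X̂(g_p) = 2(c₂x + a₁₂)(p − g)·g_p. -/

import Mathlib

/-- Partial derivatives of a function on ℝ³(x,y,p). -/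
noncomputable def pdx3 (F : ℝ × ℝ × ℝ → ℝ) (q : ℝ × ℝ × ℝ) : ℝ :=
  deriv (fun t => F (t, q.2.1, q.2.2)) q.1
noncomputable def pdy3 (F : ℝ × ℝ × ℝ → ℝ) (q : ℝ × ℝ × ℝ) : ℝ :=
  deriv (fun t => F (q.1, t, q.2.2)) q.2.1
noncomputable def pdp3 (F : ℝ × ℝ × ℝ → ℝ) (q : ℝ × ℝ × ℝ) : ℝ :=
  deriv (fun t => F (q.1, q.2.1, t)) q.2.2

/-- The ξ-component of the 𝔰𝔩₃ vector field, viewed on ℝ³(x,y,p). -/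
def Xi (a₀ a₁₁ a₁₂ c₁ c₂ : ℝ) : ℝ × ℝ × ℝ → ℝ :=
  fun q => a₀ + a₁₁ * q.1 + a₁₂ * q.2.1 + (c₁ * q.1 + c₂ * q.2.1) * q.1

/-- The η-component of the 𝔰𝔩₃ vector field, viewed on ℝ³(x,y,p). -/
def Eta (b₀ a₂₁ a₂₂ c₁ c₂ : ℝ) : ℝ × ℝ × ℝ → ℝ :=
  fun q => b₀ + a₂₁ * q.1 + a₂₂ * q.2.1 + (c₁ * q.1 + c₂ * q.2.1) * q.2.1

/-- The contact prolongation component `ζ = η_x + p(η_y − ξ_x) − p²ξ_y`. -/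
noncomputable def Zeta (a₀ a₁₁ a₁₂ b₀ a₂₁ a₂₂ c₁ c₂ : ℝ) : ℝ × ℝ × ℝ → ℝ :=
  fun q => pdx3 (Eta b₀ a₂₁ a₂₂ c₁ c₂) q
    + q.2.2 * (pdy3 (Eta b₀ a₂₁ a₂₂ c₁ c₂) q - pdx3 (Xi a₀ a₁₁ a₁₂ c₁ c₂) q)
    - q.2.2 ^ 2 * pdy3 (Xi a₀ a₁₁ a₁₂ c₁ c₂) q

/-- The ∂_g-component `G = η_p f + η_y g + η_x − (ξ_p f + ξ_y g + ξ_x)g` of the lift of the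
prolonged 𝔰𝔩₃ field to ℝ⁵(x,y,p,f,g), written as a (curried) function of (x,y,p,f,g). -/
noncomputable def Gcomp (a₀ a₁₁ a₁₂ b₀ a₂₁ a₂₂ c₁ c₂ : ℝ) (x y p f g : ℝ) : ℝ :=
  pdp3 (Eta b₀ a₂₁ a₂₂ c₁ c₂) (x, y, p) * f + pdy3 (Eta b₀ a₂₁ a₂₂ c₁ c₂) (x, y, p) * g
    + pdx3 (Eta b₀ a₂₁ a₂₂ c₁ c₂) (x, y, p)
  - (pdp3 (Xi a₀ a₁₁ a₁₂ c₁ c₂) (x, y, p) * f + pdy3 (Xi a₀ a₁₁ a₁₂ c₁ c₂) (x, y, p) * g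
    + pdx3 (Xi a₀ a₁₁ a₁₂ c₁ c₂) (x, y, p)) * g

lemma pdx3_Xi (a₀ a₁₁ a₁₂ c₁ c₂ : ℝ) (q : ℝ × ℝ × ℝ) :
    pdx3 (Xi a₀ a₁₁ a₁₂ c₁ c₂) q = a₁₁ + 2*c₁*q.1 + c₂*q.2.1 := by
  have h1 : HasDerivAt (fun t : ℝ => t) 1 q.1 := hasDerivAt_id q.1
  have h : HasDerivAt (fun t : ℝ => a₀ + a₁₁ * t + a₁₂ * q.2.1 + (c₁ * t + c₂ * q.2.1) * t)
      (a₁₁ + 2*c₁*q.1 + c₂*q.2.1) q.1 := by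
    have := (((h1.const_mul a₁₁).const_add a₀).add_const (a₁₂*q.2.1)).add
      (((h1.const_mul c₁).add_const (c₂*q.2.1)).mul h1)
    exact this.congr_deriv (by ring)
  exact h.deriv

lemma pdy3_Xi (a₀ a₁₁ a₁₂ c₁ c₂ : ℝ) (q : ℝ × ℝ × ℝ) :
    pdy3 (Xi a₀ a₁₁ a₁₂ c₁ c₂) q = a₁₂ + c₂*q.1 := by
  have h1 : HasDerivAt (fun t : ℝ => t) 1 q.2.1 := hasDerivAt_id q.2.1
  have h : HasDerivAt (fun t : ℝ => a₀ + a₁₁ * q.1 + a₁₂ * t + (c₁ * q.1 + c₂ * t) * q.1)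
      (a₁₂ + c₂*q.1) q.2.1 := by
    have := (((h1.const_mul a₁₂).const_add (a₀ + a₁₁ * q.1))).add
      (((h1.const_mul c₂).const_add (c₁*q.1)).mul_const q.1)
    exact this.congr_deriv (by ring)
  exact h.deriv

lemma pdp3_Xi (a₀ a₁₁ a₁₂ c₁ c₂ : ℝ) (q : ℝ × ℝ × ℝ) :
    pdp3 (Xi a₀ a₁₁ a₁₂ c₁ c₂) q = 0 := by
  simp [pdp3, Xi]

lemma pdx3_Eta (b₀ a₂₁ a₂₂ c₁ c₂ : ℝ) (q : ℝ × ℝ × ℝ) :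
    pdx3 (Eta b₀ a₂₁ a₂₂ c₁ c₂) q = a₂₁ + c₁*q.2.1 := by
  have h1 : HasDerivAt (fun t : ℝ => t) 1 q.1 := hasDerivAt_id q.1
  have h : HasDerivAt (fun t : ℝ => b₀ + a₂₁ * t + a₂₂ * q.2.1 + (c₁ * t + c₂ * q.2.1) * q.2.1)
      (a₂₁ + c₁*q.2.1) q.1 := by
    have := (((h1.const_mul a₂₁).const_add b₀).add_const (a₂₂*q.2.1)).add
      (((h1.const_mul c₁).add_const (c₂*q.2.1)).mul_const q.2.1)
    exact this.congr_deriv (by ring)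
  exact h.deriv

lemma pdy3_Eta (b₀ a₂₁ a₂₂ c₁ c₂ : ℝ) (q : ℝ × ℝ × ℝ) :
    pdy3 (Eta b₀ a₂₁ a₂₂ c₁ c₂) q = a₂₂ + c₁*q.1 + 2*c₂*q.2.1 := by
  have h1 : HasDerivAt (fun t : ℝ => t) 1 q.2.1 := hasDerivAt_id q.2.1
  have h : HasDerivAt (fun t : ℝ => b₀ + a₂₁ * q.1 + a₂₂ * t + (c₁ * q.1 + c₂ * t) * t)
      (a₂₂ + c₁*q.1 + 2*c₂*q.2.1) q.2.1 := by
    have := ((h1.const_mul a₂₂).const_add (b₀ + a₂₁ * q.1)).add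
      (((h1.const_mul c₂).const_add (c₁*q.1)).mul h1)
    exact this.congr_deriv (by ring)
  exact h.deriv

lemma pdp3_Eta (b₀ a₂₁ a₂₂ c₁ c₂ : ℝ) (q : ℝ × ℝ × ℝ) :
    pdp3 (Eta b₀ a₂₁ a₂₂ c₁ c₂) q = 0 := by
  simp [pdp3, Eta]

lemma pdp3_Zeta (a₀ a₁₁ a₁₂ b₀ a₂₁ a₂₂ c₁ c₂ : ℝ) (q : ℝ × ℝ × ℝ) :
    pdp3 (Zeta a₀ a₁₁ a₁₂ b₀ a₂₁ a₂₂ c₁ c₂) q =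
      (a₂₂ + c₁*q.1 + 2*c₂*q.2.1) - (a₁₁ + 2*c₁*q.1 + c₂*q.2.1)
        - 2*q.2.2*(a₁₂ + c₂*q.1) := by
  have h1 : HasDerivAt (fun t : ℝ => t) 1 q.2.2 := hasDerivAt_id q.2.2
  unfold pdp3
  have heq : (fun t => Zeta a₀ a₁₁ a₁₂ b₀ a₂₁ a₂₂ c₁ c₂ (q.1, q.2.1, t))
      = fun t => (a₂₁ + c₁*q.2.1)
        + t * ((a₂₂ + c₁*q.1 + 2*c₂*q.2.1) - (a₁₁ + 2*c₁*q.1 + c₂*q.2.1))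
        - t^2 * (a₁₂ + c₂*q.1) := by
    funext t
    simp only [Zeta, pdx3_Eta, pdy3_Eta, pdx3_Xi, pdy3_Xi]
  rw [heq]
  have h : HasDerivAt (fun t : ℝ => (a₂₁ + c₁*q.2.1)
        + t * ((a₂₂ + c₁*q.1 + 2*c₂*q.2.1) - (a₁₁ + 2*c₁*q.1 + c₂*q.2.1))
        - t^2 * (a₁₂ + c₂*q.1))
      ((a₂₂ + c₁*q.1 + 2*c₂*q.2.1) - (a₁₁ + 2*c₁*q.1 + c₂*q.2.1)
        - 2*q.2.2*(a₁₂ + c₂*q.1)) q.2.2 := by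
    have := ((h1.mul_const ((a₂₂ + c₁*q.1 + 2*c₂*q.2.1) - (a₁₁ + 2*c₁*q.1 + c₂*q.2.1))).const_add
        (a₂₁ + c₁*q.2.1)).sub ((h1.pow 2).mul_const (a₁₂ + c₂*q.1))
    exact this.congr_deriv (by ring)
  exact h.deriv

/-- the jet coordinate `I₁ = g_p` is a relative invariant of weight
`μ(I₁) = 2(c₂x + a₁₂)(p − g)`: the ∂_{g_p}-component of the prolonged lifted field,
`d_p(G) − g_x d_p(ξ) − g_y d_p(η) − g_p d_p(ζ)` (total derivatives with respect to p),
equals `2(c₂x + a₁₂)(p − g)·g_p`. -/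
theorem I1_relative_invariant (a₀ a₁₁ a₁₂ b₀ a₂₁ a₂₂ c₁ c₂ : ℝ)
    (x y p f g fp gx gy gp : ℝ) :
    -- d_p(G) = G_p + f_p·G_f + g_p·G_g :
    (deriv (fun t => Gcomp a₀ a₁₁ a₁₂ b₀ a₂₁ a₂₂ c₁ c₂ x y t f g) p
      + fp * deriv (fun t => Gcomp a₀ a₁₁ a₁₂ b₀ a₂₁ a₂₂ c₁ c₂ x y p t g) f
      + gp * deriv (fun t => Gcomp a₀ a₁₁ a₁₂ b₀ a₂₁ a₂₂ c₁ c₂ x y p f t) g)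
    -- − g_x d_p(ξ) − g_y d_p(η) − g_p d_p(ζ) :
    - gx * pdp3 (Xi a₀ a₁₁ a₁₂ c₁ c₂) (x, y, p)
    - gy * pdp3 (Eta b₀ a₂₁ a₂₂ c₁ c₂) (x, y, p)
    - gp * pdp3 (Zeta a₀ a₁₁ a₁₂ b₀ a₂₁ a₂₂ c₁ c₂) (x, y, p)
    = 2 * (c₂ * x + a₁₂) * (p - g) * gp := by
  have hG : ∀ p' f' g' : ℝ, Gcomp a₀ a₁₁ a₁₂ b₀ a₂₁ a₂₂ c₁ c₂ x y p' f' g'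
      = (a₂₂ + c₁*x + 2*c₂*y) * g' + (a₂₁ + c₁*y)
        - ((a₁₂ + c₂*x) * g' + (a₁₁ + 2*c₁*x + c₂*y)) * g' := by
    intro p' f' g'
    simp only [Gcomp, pdp3_Eta, pdy3_Eta, pdx3_Eta, pdp3_Xi, pdy3_Xi, pdx3_Xi]
    ring
  have hGp : deriv (fun t => Gcomp a₀ a₁₁ a₁₂ b₀ a₂₁ a₂₂ c₁ c₂ x y t f g) p = 0 := by
    have : (fun t => Gcomp a₀ a₁₁ a₁₂ b₀ a₂₁ a₂₂ c₁ c₂ x y t f g)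
        = fun _ => (a₂₂ + c₁*x + 2*c₂*y) * g + (a₂₁ + c₁*y)
          - ((a₁₂ + c₂*x) * g + (a₁₁ + 2*c₁*x + c₂*y)) * g := by
      funext t; exact hG t f g
    rw [this]; simp
  have hGf : deriv (fun t => Gcomp a₀ a₁₁ a₁₂ b₀ a₂₁ a₂₂ c₁ c₂ x y p t g) f = 0 := by
    have : (fun t => Gcomp a₀ a₁₁ a₁₂ b₀ a₂₁ a₂₂ c₁ c₂ x y p t g)
        = fun _ => (a₂₂ + c₁*x + 2*c₂*y) * g + (a₂₁ + c₁*y)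
          - ((a₁₂ + c₂*x) * g + (a₁₁ + 2*c₁*x + c₂*y)) * g := by
      funext t; exact hG p t g
    rw [this]; simp
  have hGg : deriv (fun t => Gcomp a₀ a₁₁ a₁₂ b₀ a₂₁ a₂₂ c₁ c₂ x y p f t) g
      = (a₂₂ + c₁*x + 2*c₂*y) - (2*(a₁₂ + c₂*x)*g + (a₁₁ + 2*c₁*x + c₂*y)) := by
    have heq : (fun t => Gcomp a₀ a₁₁ a₁₂ b₀ a₂₁ a₂₂ c₁ c₂ x y p f t)
        = fun t => (a₂₂ + c₁*x + 2*c₂*y) * t + (a₂₁ + c₁*y)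
          - ((a₁₂ + c₂*x) * t + (a₁₁ + 2*c₁*x + c₂*y)) * t := by
      funext t; exact hG p f t
    rw [heq]
    have h1 : HasDerivAt (fun t : ℝ => t) 1 g := hasDerivAt_id g
    have h : HasDerivAt (fun t : ℝ => (a₂₂ + c₁*x + 2*c₂*y) * t + (a₂₁ + c₁*y)
          - ((a₁₂ + c₂*x) * t + (a₁₁ + 2*c₁*x + c₂*y)) * t)
        ((a₂₂ + c₁*x + 2*c₂*y) - (2*(a₁₂ + c₂*x)*g + (a₁₁ + 2*c₁*x + c₂*y))) g := by
      have := ((h1.const_mul (a₂₂ + c₁*x + 2*c₂*y)).add_const (a₂₁ + c₁*y)).sub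
        (((h1.const_mul (a₁₂ + c₂*x)).add_const (a₁₁ + 2*c₁*x + c₂*y)).mul h1)
      exact this.congr_deriv (by ring)
    exact h.deriv
  rw [hGp, hGf, hGg, pdp3_Xi, pdp3_Eta, pdp3_Zeta]
  ring
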